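/- arXiv:2409.16857 — 4 statements merged into one kernel-verified Lean document; each statement's English description precedes it below -/
import Mathlib

section
/- Given a positive weight W on a domain Ω ⊂ ℝ²_+ (with nonempty interior) having all Laurent moments finite, for every n there exists a unique monic polynomial system vector 𝑃_n = (P_{n,0}, …, P_{0,n})^T, each entry monic of total degree n with leading term x₁^{n-k}x₂^k, satisfying the varying orthogonality conditions ∬_Ω 𝕏_k 𝑃_n^T x₁^{-n}x₂^{-n} W dx₁dx₂ = 0 for k = 0, 1, …, n−1. -/
open MeasureTheory MvPolynomial

lemma aux_fs (d : Fin 2 →₀ ℕ) : d = Finsupp.single 0 (d 0) + Finsupp.single 1 (d 1) := by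
  ext i
  fin_cases i <;> simp [Finsupp.single_apply]

lemma aux_analytic (p : MvPolynomial (Fin 2) ℝ) :
    AnalyticOnNhd ℝ (fun z : ℝ × ℝ => MvPolynomial.eval ![z.1, z.2] p) Set.univ := by
  induction p using MvPolynomial.induction_on with
  | C a => simpa using (analyticOnNhd_const : AnalyticOnNhd ℝ (fun _ : ℝ × ℝ => a) Set.univ)
  | add p q hp hq => simp only [map_add]; exact hp.add hq
  | mul_X p i hp =>
      have hi : AnalyticOnNhd ℝ (fun z : ℝ × ℝ => ![z.1, z.2] i) Set.univ := by
        fin_cases i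
        · simpa using (analyticOnNhd_fst : AnalyticOnNhd ℝ (fun z : ℝ × ℝ => z.1) Set.univ)
        · simpa using (analyticOnNhd_snd : AnalyticOnNhd ℝ (fun z : ℝ × ℝ => z.2) Set.univ)
      simpa [MvPolynomial.eval_mul] using hp.mul hi

lemma aux_zero (p : MvPolynomial (Fin 2) ℝ) (U : Set (ℝ × ℝ)) (hU : IsOpen U)
    (hne : U.Nonempty) (h : ∀ z ∈ U, MvPolynomial.eval ![z.1, z.2] p = 0) : p = 0 := by
  obtain ⟨z₀, hz₀⟩ := hne
  have hev : Set.EqOn (fun z : ℝ × ℝ => MvPolynomial.eval ![z.1, z.2] p) 0 Set.univ := by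
    apply (aux_analytic p).eqOn_zero_of_preconnected_of_eventuallyEq_zero
      isPreconnected_univ (Set.mem_univ z₀)
    filter_upwards [hU.mem_nhds hz₀] with z hz using h z hz
  apply MvPolynomial.funext
  intro x
  have : ![(x 0 : ℝ), x 1] = x := by
    funext i; fin_cases i <;> simp
  simpa [this] using hev (Set.mem_univ ((x 0, x 1) : ℝ × ℝ))

section

variable (Ω : Set (ℝ × ℝ)) (W : ℝ × ℝ → ℝ) (n : ℕ)

noncomputable def wfun : ℝ × ℝ → ℝ := fun z => z.1 ^ (-(n : ℤ)) * z.2 ^ (-(n : ℤ)) * W z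

variable {Ω W n}
variable (hΩmeas : MeasurableSet Ω)
  (hΩ : Ω ⊆ {z : ℝ × ℝ | 0 < z.1 ∧ 0 < z.2})
  (hint : ∀ k m : ℤ, IntegrableOn (fun z : ℝ × ℝ => z.1 ^ k * z.2 ^ m * W z) Ω)

include hΩmeas hΩ hint

lemma aux_int_mono (a b : ℕ) :
    IntegrableOn (fun z : ℝ × ℝ => z.1 ^ a * z.2 ^ b * wfun W n z) Ω := by
  apply (hint ((a : ℤ) - n) ((b : ℤ) - n)).congr_fun _ hΩmeas
  intro z hz
  obtain ⟨h1, h2⟩ := hΩ hz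
  simp only [wfun]
  rw [sub_eq_add_neg, sub_eq_add_neg, zpow_add₀ h1.ne', zpow_add₀ h2.ne',
    zpow_natCast, zpow_natCast]
  ring

lemma aux_int_poly (p : MvPolynomial (Fin 2) ℝ) :
    IntegrableOn (fun z : ℝ × ℝ => eval ![z.1, z.2] p * wfun W n z) Ω := by
  have heq : (fun z : ℝ × ℝ => eval ![z.1, z.2] p * wfun W n z)
      = fun z => ∑ d ∈ p.support, p.coeff d * (z.1 ^ d 0 * z.2 ^ d 1 * wfun W n z) := by
    funext z
    rw [eval_eq', Finset.sum_mul]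
    refine Finset.sum_congr rfl fun d _ => ?_
    rw [Fin.prod_univ_two]
    simp only [Matrix.cons_val_zero, Matrix.cons_val_one, Matrix.head_cons]
    ring
  rw [heq]
  exact integrable_finset_sum _ fun d _ =>
    ((aux_int_mono hΩmeas hΩ hint (d 0) (d 1)).const_mul _)

end

section

variable {Ω : Set (ℝ × ℝ)} {W : ℝ × ℝ → ℝ} {n : ℕ}
variable (hΩmeas : MeasurableSet Ω)
  (hΩ : Ω ⊆ {z : ℝ × ℝ | 0 < z.1 ∧ 0 < z.2})
  (hΩint : (interior Ω).Nonempty)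
  (hW : ∀ z ∈ Ω, 0 < W z)
  (hint : ∀ k m : ℤ, IntegrableOn (fun z : ℝ × ℝ => z.1 ^ k * z.2 ^ m * W z) Ω)

include hΩmeas hΩ hΩint hW hint

lemma aux_posdef (p : MvPolynomial (Fin 2) ℝ)
    (h : ∫ z in Ω, eval ![z.1, z.2] (p * p) * wfun W n z = 0) : p = 0 := by
  classical
  set g : ℝ × ℝ → ℝ := fun z => eval ![z.1, z.2] p with hg
  have hcont : Continuous g := by
    rw [← continuousOn_univ]
    exact (aux_analytic p).continuousOn
  have hwpos : ∀ z ∈ Ω, 0 < wfun W n z := fun z hz => by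
    obtain ⟨h1, h2⟩ := hΩ hz
    exact mul_pos (mul_pos (zpow_pos h1 _) (zpow_pos h2 _)) (hW z hz)
  have hevsq : ∀ z : ℝ × ℝ, eval ![z.1, z.2] (p * p) = g z ^ 2 := fun z => by
    rw [eval_mul, sq]
  have hf : IntegrableOn (fun z : ℝ × ℝ => eval ![z.1, z.2] (p * p) * wfun W n z) Ω :=
    aux_int_poly hΩmeas hΩ hint _
  have hnn : 0 ≤ᵐ[volume.restrict Ω] fun z : ℝ × ℝ => eval ![z.1, z.2] (p * p) * wfun W n z := by
    filter_upwards [ae_restrict_mem hΩmeas] with z hz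
    have := mul_nonneg (sq_nonneg (g z)) (hwpos z hz).le
    rw [← hevsq] at this
    simpa using this
  have hzero := (integral_eq_zero_iff_of_nonneg_ae hnn hf).mp h
  have h1 : ∀ᵐ z ∂(volume.restrict Ω), g z = 0 := by
    filter_upwards [hzero, ae_restrict_mem hΩmeas] with z hz0 hz
    simp only [Pi.zero_apply, hevsq] at hz0
    have := (mul_eq_zero.mp hz0).resolve_right (hwpos z hz).ne'
    exact pow_eq_zero_iff (n := 2) (by norm_num) |>.mp this
  have h2 : ∀ᵐ z ∂(volume.restrict (interior Ω)), g z = 0 :=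
    ae_restrict_of_ae_restrict_of_subset interior_subset h1
  have h3 : ∀ z ∈ interior Ω, g z = 0 := by
    by_contra hcon
    push_neg at hcon
    obtain ⟨z, hzmem, hzne⟩ := hcon
    set V : Set (ℝ × ℝ) := interior Ω ∩ {z | g z ≠ 0} with hV
    have hVopen : IsOpen V :=
      isOpen_interior.inter (isOpen_compl_singleton.preimage hcont)
    have hVpos : 0 < volume V := hVopen.measure_pos volume ⟨z, hzmem, hzne⟩
    have hnull : volume.restrict (interior Ω) {z | ¬ g z = 0} = 0 := ae_iff.mp h2
    have : volume.restrict (interior Ω) V = 0 :=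
      measure_mono_null Set.inter_subset_right hnull
    rw [Measure.restrict_apply' isOpen_interior.measurableSet,
      Set.inter_eq_self_of_subset_left Set.inter_subset_left] at this
    exact hVpos.ne' this
  exact aux_zero p (interior Ω) isOpen_interior hΩint h3

end

noncomputable def Jfun (Ω : Set (ℝ × ℝ)) (W : ℝ × ℝ → ℝ) (n : ℕ)
    (p : MvPolynomial (Fin 2) ℝ) : ℝ :=
  ∫ z in Ω, eval ![z.1, z.2] p * wfun W n z

noncomputable def Bfun (Ω : Set (ℝ × ℝ)) (W : ℝ × ℝ → ℝ) (n : ℕ)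
    (e : Fin 2 →₀ ℕ) (p : MvPolynomial (Fin 2) ℝ) : ℝ :=
  Jfun Ω W n (monomial e 1 * p)

lemma evalmono (d : Fin 2 →₀ ℕ) (c : ℝ) (z : ℝ × ℝ) :
    eval ![z.1, z.2] (monomial d c) = c * (z.1 ^ d 0 * z.2 ^ d 1) := by
  rw [eval_monomial, Finsupp.prod_pow, Fin.prod_univ_two]
  simp

section
variable (Ω : Set (ℝ × ℝ)) (W : ℝ × ℝ → ℝ) (n : ℕ)

lemma J_smul (c : ℝ) (p : MvPolynomial (Fin 2) ℝ) :
    Jfun Ω W n (c • p) = c * Jfun Ω W n p := by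
  unfold Jfun
  simp_rw [smul_eval, mul_assoc]
  exact integral_const_mul c _

lemma J_mono_mul (d : Fin 2 →₀ ℕ) (c : ℝ) (p : MvPolynomial (Fin 2) ℝ) :
    Jfun Ω W n (monomial d c * p) = c * Jfun Ω W n (monomial d 1 * p) := by
  rw [show (monomial d c : MvPolynomial (Fin 2) ℝ) * p = c • (monomial d 1 * p) by
    rw [← smul_mul_assoc, smul_monomial, smul_eq_mul, mul_one], J_smul]

lemma B_mono (e d : Fin 2 →₀ ℕ) (c : ℝ) :
    Bfun Ω W n e (monomial d c)
      = c * ∫ z in Ω, z.1 ^ (e 0 + d 0) * z.2 ^ (e 1 + d 1) * wfun W n z := by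
  unfold Bfun Jfun
  rw [monomial_mul, one_mul]
  simp_rw [evalmono, Finsupp.add_apply, mul_assoc]
  exact integral_const_mul c _

end

section
variable {Ω : Set (ℝ × ℝ)} {W : ℝ × ℝ → ℝ} {n : ℕ}
variable (hΩmeas : MeasurableSet Ω)
  (hΩ : Ω ⊆ {z : ℝ × ℝ | 0 < z.1 ∧ 0 < z.2})
  (hint : ∀ k m : ℤ, IntegrableOn (fun z : ℝ × ℝ => z.1 ^ k * z.2 ^ m * W z) Ω)

include hΩmeas hΩ hint

lemma J_sum {α : Type} (s : Finset α) (f : α → MvPolynomial (Fin 2) ℝ) :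
    Jfun Ω W n (∑ i ∈ s, f i) = ∑ i ∈ s, Jfun Ω W n (f i) := by
  unfold Jfun
  have : ∀ z : ℝ × ℝ, eval ![z.1, z.2] (∑ i ∈ s, f i) * wfun W n z
      = ∑ i ∈ s, eval ![z.1, z.2] (f i) * wfun W n z := fun z => by
    rw [map_sum, Finset.sum_mul]
  simp_rw [this]
  exact integral_finset_sum s fun i _ => aux_int_poly hΩmeas hΩ hint _

lemma B_add (e : Fin 2 →₀ ℕ) (p q : MvPolynomial (Fin 2) ℝ) :
    Bfun Ω W n e (p + q) = Bfun Ω W n e p + Bfun Ω W n e q := by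
  unfold Bfun Jfun
  rw [mul_add]
  have : ∀ z : ℝ × ℝ, eval ![z.1, z.2] (monomial e 1 * p + monomial e 1 * q) * wfun W n z
      = eval ![z.1, z.2] (monomial e 1 * p) * wfun W n z
        + eval ![z.1, z.2] (monomial e 1 * q) * wfun W n z := fun z => by
    rw [map_add, add_mul]
  simp_rw [this]
  exact integral_add (aux_int_poly hΩmeas hΩ hint _) (aux_int_poly hΩmeas hΩ hint _)

lemma B_sum {α : Type} (e : Fin 2 →₀ ℕ) (s : Finset α) (f : α → MvPolynomial (Fin 2) ℝ) :
    Bfun Ω W n e (∑ i ∈ s, f i) = ∑ i ∈ s, Bfun Ω W n e (f i) := by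
  unfold Bfun
  rw [Finset.mul_sum, J_sum hΩmeas hΩ hint]

end

noncomputable def phi (ab : ℕ × ℕ) : Fin 2 →₀ ℕ :=
  Finsupp.single 0 ab.1 + Finsupp.single 1 ab.2

@[simp] lemma phi_apply0 (ab : ℕ × ℕ) : phi ab 0 = ab.1 := by
  simp [phi, Finsupp.single_apply]

@[simp] lemma phi_apply1 (ab : ℕ × ℕ) : phi ab 1 = ab.2 := by
  simp [phi, Finsupp.single_apply]

lemma phi_inj : Function.Injective phi := fun a b h =>
  Prod.ext (by rw [← phi_apply0 a, h, phi_apply0]) (by rw [← phi_apply1 a, h, phi_apply1])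

lemma phi_eq_self (d : Fin 2 →₀ ℕ) : phi (d 0, d 1) = d := (aux_fs d).symm

noncomputable def Sdef (D : Finset (ℕ × ℕ)) (c : {x // x ∈ D} → ℝ) :
    MvPolynomial (Fin 2) ℝ :=
  ∑ j : {x // x ∈ D}, monomial (phi j.1) (c j)

lemma coeff_Sdef (D : Finset (ℕ × ℕ)) (c : {x // x ∈ D} → ℝ) (i : {x // x ∈ D}) :
    coeff (phi i.1) (Sdef D c) = c i := by
  classical
  unfold Sdef
  rw [coeff_sum, Finset.sum_eq_single i]
  · simp [coeff_monomial]
  · intro j _ hji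
    rw [coeff_monomial, if_neg (fun h => hji (Subtype.ext (phi_inj h)))]
  · intro h
    exact absurd (Finset.mem_univ i) h

lemma coeff_Sdef_of_ne (D : Finset (ℕ × ℕ)) (c : {x // x ∈ D} → ℝ) (d : Fin 2 →₀ ℕ)
    (h : ∀ j : {x // x ∈ D}, phi j.1 ≠ d) : coeff d (Sdef D c) = 0 := by
  classical
  unfold Sdef
  rw [coeff_sum]
  exact Finset.sum_eq_zero fun j _ => by rw [coeff_monomial, if_neg (h j)]

lemma integral_eq_B (Ω : Set (ℝ × ℝ)) (W : ℝ × ℝ → ℝ) (n : ℕ) (a b : ℕ)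
    (p : MvPolynomial (Fin 2) ℝ) :
    ∫ z in Ω, z.1 ^ a * z.2 ^ b * eval ![z.1, z.2] p *
        (z.1 ^ (-(n : ℤ)) * z.2 ^ (-(n : ℤ)) * W z)
      = Bfun Ω W n (phi (a, b)) p := by
  unfold Bfun Jfun wfun
  congr 1
  funext z
  rw [eval_mul, evalmono, phi_apply0, phi_apply1]
  ring

section
variable {Ω : Set (ℝ × ℝ)} {W : ℝ × ℝ → ℝ} {n : ℕ}
variable (hΩmeas : MeasurableSet Ω)
  (hΩ : Ω ⊆ {z : ℝ × ℝ | 0 < z.1 ∧ 0 < z.2})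
  (hint : ∀ k m : ℤ, IntegrableOn (fun z : ℝ × ℝ => z.1 ^ k * z.2 ^ m * W z) Ω)

include hΩmeas hΩ hint

lemma B_Sdef (e : Fin 2 →₀ ℕ) (D : Finset (ℕ × ℕ)) (c : {x // x ∈ D} → ℝ) :
    Bfun Ω W n e (Sdef D c)
      = ∑ j : {x // x ∈ D}, c j * Bfun Ω W n e (monomial (phi j.1) 1) := by
  unfold Sdef
  rw [B_sum hΩmeas hΩ hint]
  exact Finset.sum_congr rfl fun j _ => by
    rw [B_mono, B_mono, one_mul]

lemma J_Sdef_mul (D : Finset (ℕ × ℕ)) (c : {x // x ∈ D} → ℝ) (q : MvPolynomial (Fin 2) ℝ) :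
    Jfun Ω W n (Sdef D c * q)
      = ∑ j : {x // x ∈ D}, c j * Bfun Ω W n (phi j.1) q := by
  unfold Sdef Bfun
  rw [Finset.sum_mul, J_sum hΩmeas hΩ hint]
  exact Finset.sum_congr rfl fun j _ => J_mono_mul Ω W n _ _ _

end

/-- Existence and uniqueness of the monic polynomial system orthogonal with respect to
the varying weight `W_n = x₁^{-n}x₂^{-n}W`: for every `n` there is a unique vector
`(P_{n,0}, …, P_{0,n})` of monic bivariate polynomials, `P_{n-k,k}` having leading term
`x₁^{n-k}x₂^k` and total degree `n`, such that
`∬_Ω 𝕏_m 𝑃_nᵀ x₁^{-n}x₂^{-n} W = 0` for `m = 0, …, n-1`. -/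
theorem existence_uniqueness_VOPS
    (Ω : Set (ℝ × ℝ)) (W : ℝ × ℝ → ℝ)
    (hΩmeas : MeasurableSet Ω)
    (hΩ : Ω ⊆ {z : ℝ × ℝ | 0 < z.1 ∧ 0 < z.2})
    (hΩint : (interior Ω).Nonempty)
    (hW : ∀ z ∈ Ω, 0 < W z)
    (hint : ∀ k m : ℤ,
      IntegrableOn (fun z : ℝ × ℝ => z.1 ^ k * z.2 ^ m * W z) Ω)
    (n : ℕ) :
    ∃! P : Fin (n + 1) → MvPolynomial (Fin 2) ℝ,
      (∀ k : Fin (n + 1),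
        (P k).coeff (Finsupp.single 0 (n - (k : ℕ)) + Finsupp.single 1 (k : ℕ)) = 1 ∧
        ∀ d : Fin 2 →₀ ℕ,
          d ≠ Finsupp.single 0 (n - (k : ℕ)) + Finsupp.single 1 (k : ℕ) →
          n ≤ d 0 + d 1 → (P k).coeff d = 0) ∧
      (∀ m < n, ∀ j : Fin (m + 1), ∀ k : Fin (n + 1),
        ∫ z in Ω, z.1 ^ (m - (j : ℕ)) * z.2 ^ (j : ℕ) *
          MvPolynomial.eval ![z.1, z.2] (P k) *
          (z.1 ^ (-(n : ℤ)) * z.2 ^ (-(n : ℤ)) * W z) = 0) := by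
  classical
  set D : Finset (ℕ × ℕ) :=
    (Finset.range n ×ˢ Finset.range n).filter (fun ab => ab.1 + ab.2 < n) with hD
  have hDmem : ∀ ab : ℕ × ℕ, ab ∈ D ↔ ab.1 + ab.2 < n := by
    intro ab
    simp only [hD, Finset.mem_filter, Finset.mem_product, Finset.mem_range]
    omega
  set M : Matrix {x // x ∈ D} {x // x ∈ D} ℝ :=
    fun i j => Bfun Ω W n (phi i.1) (monomial (phi j.1) 1) with hM
  set T := M.mulVecLin with hT
  have hTapp : ∀ (c : {x // x ∈ D} → ℝ) (i : {x // x ∈ D}),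
      T c i = ∑ j : {x // x ∈ D}, Bfun Ω W n (phi i.1) (monomial (phi j.1) 1) * c j := by
    intro c i
    rfl
  have hBmonS : ∀ (c : {x // x ∈ D} → ℝ) (i : {x // x ∈ D}),
      Bfun Ω W n (phi i.1) (Sdef D c) = T c i := by
    intro c i
    rw [B_Sdef hΩmeas hΩ hint, hTapp]
    exact Finset.sum_congr rfl fun j _ => mul_comm _ _
  have hTinj : Function.Injective T := by
    rw [← LinearMap.ker_eq_bot, LinearMap.ker_eq_bot']
    intro c hc
    have hq0 : Sdef D c = 0 := by
      apply aux_posdef hΩmeas hΩ hΩint hW hint (n := n)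
      rw [show (∫ z in Ω, eval ![z.1, z.2] (Sdef D c * Sdef D c) * wfun W n z)
          = Jfun Ω W n (Sdef D c * Sdef D c) from rfl,
        J_Sdef_mul hΩmeas hΩ hint]
      refine Finset.sum_eq_zero fun j _ => ?_
      rw [hBmonS, hc]
      simp
    funext i
    have h := congrArg (coeff (phi i.1)) hq0
    rw [coeff_Sdef, coeff_zero] at h
    simpa using h
  have hTsurj : Function.Surjective T := LinearMap.injective_iff_surjective.mp hTinj
  have hkle : ∀ k : Fin (n + 1), (k : ℕ) ≤ n := fun k => Nat.lt_succ_iff.mp k.isLt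
  choose c hc using fun k : Fin (n + 1) =>
    hTsurj (fun i => - Bfun Ω W n (phi i.1) (monomial (phi (n - (k : ℕ), (k : ℕ))) 1))
  set P : Fin (n + 1) → MvPolynomial (Fin 2) ℝ :=
    fun k => monomial (phi (n - (k : ℕ), (k : ℕ))) 1 + Sdef D (c k) with hP
  have hphiD : ∀ (j : {x // x ∈ D}) (d : Fin 2 →₀ ℕ), n ≤ d 0 + d 1 → phi j.1 ≠ d := by
    intro j d hd heq
    have hj := (hDmem j.1).mp j.2
    rw [← heq, phi_apply0, phi_apply1] at hd
    omega
  have hleadsum : ∀ k : Fin (n + 1),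
      phi (n - (k : ℕ), (k : ℕ)) 0 + phi (n - (k : ℕ), (k : ℕ)) 1 = n := fun k => by
    rw [phi_apply0, phi_apply1]
    have := hkle k
    omega
  have hBQzero : ∀ (Q : MvPolynomial (Fin 2) ℝ),
      (∀ m < n, ∀ j : Fin (m + 1),
        ∫ z in Ω, z.1 ^ (m - (j : ℕ)) * z.2 ^ (j : ℕ) *
          MvPolynomial.eval ![z.1, z.2] Q *
          (z.1 ^ (-(n : ℤ)) * z.2 ^ (-(n : ℤ)) * W z) = 0) →
      ∀ i : {x // x ∈ D}, Bfun Ω W n (phi i.1) Q = 0 := by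
    rintro Q hQ ⟨⟨a, b⟩, hmem⟩
    have hab : a + b < n := (hDmem _).mp hmem
    have h := hQ (a + b) hab ⟨b, by omega⟩
    simp only [Fin.val_mk] at h
    rw [Nat.add_sub_cancel] at h
    rw [← integral_eq_B]
    exact h
  refine ⟨P, ⟨fun k => ⟨?_, ?_⟩, ?_⟩, ?_⟩
  · -- leading coefficient is 1
    show coeff (Finsupp.single 0 (n - (k : ℕ)) + Finsupp.single 1 (k : ℕ)) (P k) = 1
    rw [hP]
    show coeff (phi (n - (k : ℕ), (k : ℕ))) (monomial (phi (n - (k : ℕ), (k : ℕ))) 1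
      + Sdef D (c k)) = 1
    rw [coeff_add, coeff_monomial, if_pos rfl,
      coeff_Sdef_of_ne _ _ _ (fun j => hphiD j _ (le_of_eq (hleadsum k).symm)), add_zero]
  · -- higher coefficients vanish
    intro d hd hdeg
    show coeff d (P k) = 0
    rw [hP]
    show coeff d (monomial (phi (n - (k : ℕ), (k : ℕ))) 1 + Sdef D (c k)) = 0
    rw [coeff_add, coeff_monomial, if_neg (fun h => hd h.symm),
      coeff_Sdef_of_ne _ _ _ (fun j => hphiD j _ hdeg), add_zero]
  · -- orthogonality
    intro m hm j k
    have hjm : (j : ℕ) ≤ m := Nat.lt_succ_iff.mp j.isLt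
    rw [integral_eq_B]
    have hmem : (m - (j : ℕ), (j : ℕ)) ∈ D := (hDmem _).mpr (by omega)
    have hsplit : Bfun Ω W n (phi (m - (j : ℕ), (j : ℕ))) (P k)
        = Bfun Ω W n (phi (m - (j : ℕ), (j : ℕ)))
            (monomial (phi (n - (k : ℕ), (k : ℕ))) 1)
          + T (c k) ⟨(m - (j : ℕ), (j : ℕ)), hmem⟩ := by
      rw [hP]
      show Bfun Ω W n (phi (m - (j : ℕ), (j : ℕ)))
          (monomial (phi (n - (k : ℕ), (k : ℕ))) 1 + Sdef D (c k)) = _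
      rw [B_add hΩmeas hΩ hint, hBmonS (c k) ⟨(m - (j : ℕ), (j : ℕ)), hmem⟩]
    rw [hsplit, congrFun (hc k) ⟨(m - (j : ℕ), (j : ℕ)), hmem⟩, add_neg_cancel]
  · -- uniqueness
    rintro Q ⟨hQshape, hQorth⟩
    funext k
    set c' : {x // x ∈ D} → ℝ := fun i => coeff (phi i.1) (Q k) with hc'
    have hQdecomp : Q k = monomial (phi (n - (k : ℕ), (k : ℕ))) 1 + Sdef D c' := by
      apply MvPolynomial.ext
      intro d
      by_cases hd : d = phi (n - (k : ℕ), (k : ℕ))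
      · rw [hd, coeff_add, coeff_monomial, if_pos rfl,
          coeff_Sdef_of_ne _ _ _ (fun j => hphiD j _ (le_of_eq (hleadsum k).symm)), add_zero]
        exact (hQshape k).1
      · by_cases hdeg : n ≤ d 0 + d 1
        · rw [coeff_add, coeff_monomial, if_neg (fun h => hd h.symm),
            coeff_Sdef_of_ne _ _ _ (fun j => hphiD j _ hdeg), add_zero]
          exact (hQshape k).2 d hd hdeg
        · push_neg at hdeg
          have hmem : (d 0, d 1) ∈ D := (hDmem _).mpr hdeg
          have hlead_ne : phi (n - (k : ℕ), (k : ℕ)) ≠ d := by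
            intro h
            rw [← h, phi_apply0, phi_apply1] at hdeg
            have := hkle k
            omega
          rw [coeff_add, coeff_monomial, if_neg hlead_ne, zero_add]
          conv_lhs => rw [← phi_eq_self d]
          conv_rhs => rw [← phi_eq_self d]
          exact (coeff_Sdef D c' ⟨(d 0, d 1), hmem⟩).symm
    have hQB : ∀ i : {x // x ∈ D}, Bfun Ω W n (phi i.1) (Q k) = 0 :=
      hBQzero (Q k) (fun m hm j => hQorth m hm j k)
    have hTc' : T c' = fun i => - Bfun Ω W n (phi i.1)
        (monomial (phi (n - (k : ℕ), (k : ℕ))) 1) := by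
      funext i
      have h0 := hQB i
      rw [hQdecomp, B_add hΩmeas hΩ hint, hBmonS c' i] at h0
      linarith
    have hcc : c' = c k := hTinj (by rw [hTc', hc k])
    rw [hQdecomp, hcc, hP]
end

section
/- The determinantal formula P_{n-k,k}(x₁,x₂) = (1/det 𝓜̂_n) · det of the bordered matrix [[𝓜̂_n, column of moment vectors 𝔪_{r,n,k}^{(n)}], [row of monomial vectors 𝕏_0^T,…,𝕏_{n-1}^T, x₁^{n-k}x₂^k]] defines a monic polynomial of total degree n with leading term x₁^{n-k}x₂^k satisfying the varying orthogonality conditions ⟨x₁^{m-j}x₂^j, P_{n-k,k}⟩_n = 0 for all m < n and 0 ≤ j ≤ m. -/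
open Matrix MeasureTheory

/-- Row/column index set of the truncated block moment matrix `𝓜̂_n`: pairs `(r, j)`
with `0 ≤ r ≤ n-1` and `0 ≤ j ≤ r`; its cardinality is `t_{n-1}`. -/
abbrev BlockIdx (n : ℕ) := Σ r : Fin n, Fin ((r : ℕ) + 1)

private lemma det_row_expand {ι R : Type*} [Fintype ι] [DecidableEq ι] [CommRing R]
    (M : Matrix ι ι R) (i₀ : ι) (v : ι → R) :
    (M.updateRow i₀ v).det =
      ∑ i, v i * (M.updateRow i₀ (fun j => if i = j then 1 else 0)).det := by
  let L : (ι → R) →ₗ[R] R :=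
    { toFun := fun u => (M.updateRow i₀ u).det
      map_add' := Matrix.det_updateRow_add M i₀
      map_smul' := fun s u => by simp [Matrix.det_updateRow_smul] }
  simpa [L, smul_eq_mul] using LinearMap.pi_apply_eq_sum_univ L v

/-- The determinantal formula of Theorem 3.2: the bordered determinant
`P_{n-k,k}(x₁,x₂) = det [[𝓜̂_n, 𝔪_{·,n,k}^{(n)}], [𝕏_0ᵀ … 𝕏_{n-1}ᵀ, x₁^{n-k}x₂^k]] / det 𝓜̂_n`
defines a monic polynomial of total degree `n` with leading term `x₁^{n-k}x₂^k`
satisfying `⟨x₁^{m-j}x₂^j, P_{n-k,k}⟩_n = 0` for all `m < n`, `0 ≤ j ≤ m`. -/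
theorem determinantal_formula_VOPS
    (Ω : Set (ℝ × ℝ)) (W : ℝ × ℝ → ℝ)
    (hΩmeas : MeasurableSet Ω)
    (hΩ : Ω ⊆ {z : ℝ × ℝ | 0 < z.1 ∧ 0 < z.2})
    (hW : ∀ z ∈ Ω, 0 < W z)
    (hint : ∀ k m : ℤ,
      IntegrableOn (fun z : ℝ × ℝ => z.1 ^ k * z.2 ^ m * W z) Ω)
    (n : ℕ) (k : Fin (n + 1))
    (𝓜 : Matrix (BlockIdx n) (BlockIdx n) ℝ)
    (h𝓜 : ∀ a b : BlockIdx n,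
      𝓜 a b = ∫ z in Ω,
        (z.1 ^ ((a.1 : ℕ) - (a.2 : ℕ)) * z.2 ^ (a.2 : ℕ)) *
        (z.1 ^ ((b.1 : ℕ) - (b.2 : ℕ)) * z.2 ^ (b.2 : ℕ)) *
        (z.1 ^ (-(n : ℤ)) * z.2 ^ (-(n : ℤ)) * W z))
    (hdet : 𝓜.det ≠ 0)
    (N : ℝ × ℝ → Matrix (Option (BlockIdx n)) (Option (BlockIdx n)) ℝ)
    (hN₁ : ∀ (z : ℝ × ℝ) (a b : BlockIdx n), N z (some a) (some b) = 𝓜 a b)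
    (hN₂ : ∀ (z : ℝ × ℝ) (a : BlockIdx n), N z (some a) none =
      ∫ w in Ω,
        (w.1 ^ ((a.1 : ℕ) - (a.2 : ℕ)) * w.2 ^ (a.2 : ℕ)) *
        (w.1 ^ (n - (k : ℕ)) * w.2 ^ (k : ℕ)) *
        (w.1 ^ (-(n : ℤ)) * w.2 ^ (-(n : ℤ)) * W w))
    (hN₃ : ∀ (z : ℝ × ℝ) (b : BlockIdx n), N z none (some b) =
      z.1 ^ ((b.1 : ℕ) - (b.2 : ℕ)) * z.2 ^ (b.2 : ℕ))
    (hN₄ : ∀ z : ℝ × ℝ, N z none none = z.1 ^ (n - (k : ℕ)) * z.2 ^ (k : ℕ))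
    (P : ℝ × ℝ → ℝ)
    (hP : ∀ z : ℝ × ℝ, P z = (𝓜.det)⁻¹ * (N z).det) :
    (∃ pol : MvPolynomial (Fin 2) ℝ,
      (∀ z : ℝ × ℝ, MvPolynomial.eval ![z.1, z.2] pol = P z) ∧
      pol.coeff (Finsupp.single 0 (n - (k : ℕ)) + Finsupp.single 1 (k : ℕ)) = 1 ∧
      (∀ d : Fin 2 →₀ ℕ,
        d ≠ Finsupp.single 0 (n - (k : ℕ)) + Finsupp.single 1 (k : ℕ) →
        n ≤ d 0 + d 1 → pol.coeff d = 0)) ∧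
    (∀ m < n, ∀ j : Fin (m + 1),
      ∫ z in Ω, z.1 ^ (m - (j : ℕ)) * z.2 ^ (j : ℕ) * P z *
        (z.1 ^ (-(n : ℤ)) * z.2 ^ (-(n : ℤ)) * W z) = 0) := by
  classical
  set z₀ : ℝ × ℝ := (1, 1) with hz₀
  -- rows indexed by `some a` do not depend on `z`
  have hrowconst : ∀ (z z' : ℝ × ℝ) (a : BlockIdx n), N z (some a) = N z' (some a) := by
    intro z z' a
    funext b
    cases b with
    | none => rw [hN₂, hN₂]
    | some b => rw [hN₁, hN₁]
  have hNdec : ∀ z : ℝ × ℝ, N z = (N z₀).updateRow none (N z none) := by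
    intro z
    ext i b
    cases i with
    | none => rw [Matrix.updateRow_self]
    | some a =>
        rw [Matrix.updateRow_ne (by simp)]
        exact congrFun (hrowconst z z₀ a) b
  -- cofactors of the last row
  set c : Option (BlockIdx n) → ℝ :=
    fun i => ((N z₀).updateRow none (fun j => if i = j then 1 else 0)).det with hc
  have hdetex : ∀ z : ℝ × ℝ, (N z).det = ∑ i, N z none i * c i := by
    intro z
    conv_lhs => rw [hNdec z]
    exact det_row_expand _ _ _
  -- the cofactor of the corner entry is `det 𝓜`
  have hcnone : c none = 𝓜.det := by
    have he : ((N z₀).updateRow none (fun j => if none = j then 1 else 0)).submatrix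
        (Equiv.optionEquivSumPUnit (BlockIdx n)).symm
        (Equiv.optionEquivSumPUnit (BlockIdx n)).symm
        = Matrix.fromBlocks 𝓜 (Matrix.of fun a (_ : Unit) => N z₀ (some a) none) 0 1 := by
      ext i j
      rcases i with a | u <;> rcases j with b | v <;>
        simp [Matrix.updateRow_apply, Matrix.fromBlocks, hN₁, Matrix.one_apply]
    have h' := Matrix.det_submatrix_equiv_self
      (Equiv.optionEquivSumPUnit (BlockIdx n)).symm
      ((N z₀).updateRow none (fun j => if none = j then 1 else 0))
    show ((N z₀).updateRow none (fun j => if none = j then 1 else 0)).det = 𝓜.det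
    rw [← h', he, Matrix.det_fromBlocks_zero₂₁, Matrix.det_one, mul_one]
  constructor
  · -- existence of the polynomial
    refine ⟨MvPolynomial.C (𝓜.det)⁻¹ * ∑ i : Option (BlockIdx n),
        MvPolynomial.C (c i) *
        (MvPolynomial.X 0 ^ (i.elim (n - (k : ℕ)) (fun b => (b.1 : ℕ) - (b.2 : ℕ))) *
         MvPolynomial.X 1 ^ (i.elim (k : ℕ) (fun b => (b.2 : ℕ)))), ?_, ?_, ?_⟩
    · intro z
      rw [hP z, hdetex z]
      simp only [_root_.map_mul, map_sum, map_pow, MvPolynomial.eval_C, MvPolynomial.eval_X,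
        Matrix.cons_val_zero, Matrix.cons_val_one, Matrix.head_cons]
      congr 1
      refine Finset.sum_congr rfl fun i _ => ?_
      cases i with
      | none => rw [hN₄ z]; simp only [Option.elim_none]; ring
      | some b => rw [hN₃ z b]; simp only [Option.elim_some]; ring
    · -- leading coefficient
      have hmon : ∀ a b : ℕ, (MvPolynomial.X 0 ^ a * MvPolynomial.X 1 ^ b :
          MvPolynomial (Fin 2) ℝ)
          = MvPolynomial.monomial (Finsupp.single 0 a + Finsupp.single 1 b) 1 := by
        intro a b
        rw [MvPolynomial.X_pow_eq_monomial, MvPolynomial.X_pow_eq_monomial,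
          MvPolynomial.monomial_mul, one_mul]
      simp only [hmon, MvPolynomial.coeff_C_mul, MvPolynomial.coeff_sum,
        MvPolynomial.coeff_monomial]
      rw [Fintype.sum_option]
      simp only [Option.elim_none, Option.elim_some]
      simp only [eq_self_iff_true, if_true, mul_one]
      rw [Finset.sum_eq_zero, add_zero, hcnone, inv_mul_cancel₀ hdet]
      intro b _
      refine mul_eq_zero_of_right _ (if_neg ?_)
      intro h
      have h0 := congrArg (fun f : Fin 2 →₀ ℕ => f 0) h
      have h1 := congrArg (fun f : Fin 2 →₀ ℕ => f 1) h
      simp [Finsupp.single_apply] at h0 h1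
      have hb : (b.2 : ℕ) ≤ (b.1 : ℕ) := Nat.lt_succ_iff.mp b.2.2
      have hk : (k : ℕ) ≤ n := Nat.lt_succ_iff.mp k.2
      have hbn : (b.1 : ℕ) < n := b.1.2
      omega
    · -- higher coefficients vanish
      intro d hd hdeg
      have hmon : ∀ a b : ℕ, (MvPolynomial.X 0 ^ a * MvPolynomial.X 1 ^ b :
          MvPolynomial (Fin 2) ℝ)
          = MvPolynomial.monomial (Finsupp.single 0 a + Finsupp.single 1 b) 1 := by
        intro a b
        rw [MvPolynomial.X_pow_eq_monomial, MvPolynomial.X_pow_eq_monomial,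
          MvPolynomial.monomial_mul, one_mul]
      simp only [hmon, MvPolynomial.coeff_C_mul, MvPolynomial.coeff_sum,
        MvPolynomial.coeff_monomial]
      rw [Finset.sum_eq_zero, mul_zero]
      intro i _
      cases i with
      | none =>
          simp only [Option.elim_none]
          refine mul_eq_zero_of_right _ (if_neg ?_)
          exact fun h => hd h.symm
      | some b =>
          simp only [Option.elim_some]
          refine mul_eq_zero_of_right _ (if_neg ?_)
          intro h
          have h0 := congrArg (fun f : Fin 2 →₀ ℕ => f 0) h
          have h1 := congrArg (fun f : Fin 2 →₀ ℕ => f 1) h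
          simp [Finsupp.single_apply] at h0 h1
          have hb : (b.2 : ℕ) ≤ (b.1 : ℕ) := Nat.lt_succ_iff.mp b.2.2
          have hbn : (b.1 : ℕ) < n := b.1.2
          omega
  · -- orthogonality
    intro m hm j
    set a₀ : BlockIdx n := ⟨⟨m, hm⟩, ⟨(j : ℕ), j.2⟩⟩ with ha₀
    set g : ℝ × ℝ → ℝ := fun z =>
      z.1 ^ (m - (j : ℕ)) * z.2 ^ (j : ℕ) *
        (z.1 ^ (-(n : ℤ)) * z.2 ^ (-(n : ℤ)) * W z) with hg
    -- basic integrability of monomials against the weight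
    have key : ∀ a b : ℕ, IntegrableOn
        (fun z : ℝ × ℝ => (z.1 ^ a * z.2 ^ b) *
          (z.1 ^ (-(n : ℤ)) * z.2 ^ (-(n : ℤ)) * W z)) Ω := by
      intro a b
      refine (hint ((a : ℤ) - n) ((b : ℤ) - n)).congr_fun ?_ hΩmeas
      intro z hz
      have h1 : z.1 ≠ 0 := (hΩ hz).1.ne'
      have h2 : z.2 ≠ 0 := (hΩ hz).2.ne'
      simp only
      rw [sub_eq_add_neg, sub_eq_add_neg, zpow_add₀ h1, zpow_add₀ h2,
        zpow_natCast, zpow_natCast]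
      ring
    have hFint : ∀ i : Option (BlockIdx n),
        IntegrableOn (fun z : ℝ × ℝ => g z * N z none i) Ω := by
      intro i
      cases i with
      | none =>
          have heq : (fun z : ℝ × ℝ =>
              (z.1 ^ ((m - (j : ℕ)) + (n - (k : ℕ))) * z.2 ^ ((j : ℕ) + (k : ℕ))) *
                (z.1 ^ (-(n : ℤ)) * z.2 ^ (-(n : ℤ)) * W z))
              = fun z => g z * N z none none := by
            funext z
            rw [hN₄, hg, pow_add, pow_add]
            ring
          exact heq ▸ key _ _
      | some b =>
          have heq : (fun z : ℝ × ℝ =>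
              (z.1 ^ ((m - (j : ℕ)) + ((b.1 : ℕ) - (b.2 : ℕ))) *
                z.2 ^ ((j : ℕ) + (b.2 : ℕ))) *
                (z.1 ^ (-(n : ℤ)) * z.2 ^ (-(n : ℤ)) * W z))
              = fun z => g z * N z none (some b) := by
            funext z
            rw [hN₃, hg, pow_add, pow_add]
            ring
          exact heq ▸ key _ _
    have h1 : (∫ z in Ω, z.1 ^ (m - (j : ℕ)) * z.2 ^ (j : ℕ) * P z *
        (z.1 ^ (-(n : ℤ)) * z.2 ^ (-(n : ℤ)) * W z))
        = (𝓜.det)⁻¹ * ∫ z in Ω, g z * (N z).det := by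
      rw [← integral_const_mul]
      refine integral_congr_ae (Filter.Eventually.of_forall fun z => ?_)
      simp only [hP, hg]
      ring
    rw [h1]
    have h2 : (∫ z in Ω, g z * (N z).det)
        = ∑ i, (∫ z in Ω, g z * N z none i) * c i := by
      have : (fun z : ℝ × ℝ => g z * (N z).det)
          = fun z => ∑ i, (fun i (z : ℝ × ℝ) => (g z * N z none i) * c i) i z := by
        funext z
        rw [hdetex z, Finset.mul_sum]
        exact Finset.sum_congr rfl fun i _ => by ring
      rw [this, integral_finset_sum _ (fun i _ => (hFint i).mul_const (c i))]
      exact Finset.sum_congr rfl fun i _ => integral_mul_const _ _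
    rw [h2]
    -- the integrated row coincides with row `a₀` of the matrix
    have hu : (fun i => ∫ z in Ω, g z * N z none i) = N z₀ (some a₀) := by
      funext i
      cases i with
      | none =>
          rw [hN₂]
          refine integral_congr_ae (Filter.Eventually.of_forall fun z => ?_)
          simp only [hg, hN₄]
          ring
      | some b =>
          rw [hN₁, h𝓜]
          refine integral_congr_ae (Filter.Eventually.of_forall fun z => ?_)
          simp only [hg, hN₃]
          ring
    have h3 : ∑ i, (∫ z in Ω, g z * N z none i) * c i
        = ((N z₀).updateRow none (N z₀ (some a₀))).det := by
      rw [det_row_expand]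
      exact Finset.sum_congr rfl fun i _ => by rw [congrFun hu i]
    rw [h3, Matrix.det_zero_of_row_eq (i := none) (j := some a₀) (by simp), mul_zero]
    rw [Matrix.updateRow_self, Matrix.updateRow_ne (by simp)]
end

section
/- Let {𝑃_n} be a VOPS satisfying the R_II three term relations x_i 𝑃_n = A_{n,i} 𝑃_{n+1} + B_{n,i} 𝑃_n + x₁x₂ C_{n,i} 𝑃_{n-1}, i = 1,2. If the joint matrix A_n = (A_{n,1}; A_{n,2}) (stacked vertically, size 2(n+1)×(n+2)) has full rank n+2, then there exist matrices D_{n,1}^T, D_{n,2}^T of size (n+2)×(n+1) with D_{n,1}^T A_{n,1} + D_{n,2}^T A_{n,2} = I_{n+2}, and the recurrence 𝑃_{n+1} = x₁ D_{n,1}^T 𝑃_n + x₂ D_{n,2}^T 𝑃_n + E_n 𝑃_n + x₁x₂ F_n 𝑃_{n-1} holds with E_n = −(D_{n,1}^T B_{n,1} + D_{n,2}^T B_{n,2}) and F_n = −(D_{n,1}^T C_{n,1} + D_{n,2}^T C_{n,2}). -/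
open Matrix

theorem RII_aux_leftinv {a b : ℕ} (M : Matrix (Fin a) (Fin b) ℝ) (h : M.rank = b) :
    ∃ L : Matrix (Fin b) (Fin a) ℝ, L * M = 1 := by
  have hker : LinearMap.ker M.mulVecLin = ⊥ := by
    rw [← Submodule.finrank_eq_zero (R := ℝ)]
    have h1 := LinearMap.finrank_range_add_finrank_ker M.mulVecLin
    rw [Module.finrank_fintype_fun_eq_card, Fintype.card_fin] at h1
    have : M.rank = Module.finrank ℝ (LinearMap.range M.mulVecLin) := rfl
    omega
  obtain ⟨g, hg⟩ := M.mulVecLin.exists_leftInverse_of_injective hker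
  refine ⟨LinearMap.toMatrix' g, ?_⟩
  have : (LinearMap.toMatrix' g) * (LinearMap.toMatrix' M.mulVecLin)
      = LinearMap.toMatrix' (g.comp M.mulVecLin) := (LinearMap.toMatrix'_comp _ _).symm
  rw [hg] at this
  rw [show (LinearMap.toMatrix' M.mulVecLin : Matrix (Fin a) (Fin b) ℝ) = M from
    LinearMap.toMatrix'_toLin' M, LinearMap.toMatrix'_id] at this
  exact this

theorem RII_aux_rank_submatrix {l m p : Type*} [Fintype l] [Fintype m] [Fintype p]
    [DecidableEq p] (e : l ≃ m) (A : Matrix m p ℝ) :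
    (A.submatrix e id).rank = A.rank := by
  have hcomp : (A.submatrix (e : l → m) id).mulVecLin
      = (LinearMap.funLeft ℝ ℝ e).comp A.mulVecLin := by
    apply LinearMap.ext; intro v
    funext i
    simp [Matrix.mulVecLin, Matrix.mulVec, Matrix.submatrix, dotProduct,
      LinearMap.funLeft]
  rw [Matrix.rank, Matrix.rank, hcomp, LinearMap.range_comp]
  exact LinearEquiv.finrank_map_eq (LinearEquiv.funCongrLeft ℝ ℝ e) _

theorem RII_aux_rowexp {n m p : ℕ} (P R : Fin (n+1) → MvPolynomial (Fin 2) ℝ)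
    (d : Fin (n+1) → ℝ)
    (Q : Fin m → MvPolynomial (Fin 2) ℝ) (S : Fin p → MvPolynomial (Fin 2) ℝ)
    (A : Matrix (Fin (n+1)) (Fin m) ℝ) (B : Matrix (Fin (n+1)) (Fin (n+1)) ℝ)
    (C : Matrix (Fin (n+1)) (Fin p) ℝ) (x y : MvPolynomial (Fin 2) ℝ)
    (h : ∀ j, x * P j = (∑ k, A j k • Q k) + (∑ k, B j k • R k) + x * y * ∑ k, C j k • S k) :
    x * ∑ j, d j • P j
      = (∑ k, (∑ j, d j * A j k) • Q k) + (∑ k, (∑ j, d j * B j k) • R k)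
        + x * y * ∑ k, (∑ j, d j * C j k) • S k := by
  rw [Finset.mul_sum]
  calc ∑ j, x * d j • P j = ∑ j, d j • (x * P j) := by simp_rw [mul_smul_comm]
    _ = ∑ j, ((∑ k, (d j * A j k) • Q k) + (∑ k, (d j * B j k) • R k)
          + x * y * ∑ k, (d j * C j k) • S k) := by
        simp_rw [h, smul_add, ← mul_smul_comm, Finset.smul_sum, smul_smul]
    _ = _ := by
        rw [Finset.sum_add_distrib, Finset.sum_add_distrib, ← Finset.mul_sum]
        congr 1
        · congr 1
          · rw [Finset.sum_comm]; simp_rw [Finset.sum_smul]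
          · rw [Finset.sum_comm]; simp_rw [Finset.sum_smul]
        · rw [Finset.sum_comm]; simp_rw [Finset.sum_smul]

/-- **R_II type three term recurrence relation** (Theorem 4.2).  Let `{𝑃_n}` be a VOPS
satisfying the R_II three term relations
`x_i 𝑃_n = A_{n,i} 𝑃_{n+1} + B_{n,i} 𝑃_n + x₁x₂ C_{n,i} 𝑃_{n-1}`, `i = 1, 2`
(here encoded by `i : Fin 2`, with `i = 0` for `x₁`).  If the joint matrix
`A_n = (A_{n,1}; A_{n,2})` (stacked vertically, of size `2(n+1) × (n+2)`) has full rank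
`n+2`, then there exist matrices `D_{n,1}ᵀ, D_{n,2}ᵀ` of size `(n+2) × (n+1)` with
`D_{n,1}ᵀ A_{n,1} + D_{n,2}ᵀ A_{n,2} = I_{n+2}` and
`𝑃_{n+1} = x₁ D_{n,1}ᵀ 𝑃_n + x₂ D_{n,2}ᵀ 𝑃_n + E_n 𝑃_n + x₁x₂ F_n 𝑃_{n-1}`, where
`E_n = −(D_{n,1}ᵀ B_{n,1} + D_{n,2}ᵀ B_{n,2})` and
`F_n = −(D_{n,1}ᵀ C_{n,1} + D_{n,2}ᵀ C_{n,2})`. -/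
theorem RII_three_term_recurrence
    (P : (n : ℕ) → Fin (n + 1) → MvPolynomial (Fin 2) ℝ)
    (hP0 : P 0 = fun _ => 1)
    (A : (n : ℕ) → Fin 2 → Matrix (Fin (n + 1)) (Fin (n + 2)) ℝ)
    (B : (n : ℕ) → Fin 2 → Matrix (Fin (n + 1)) (Fin (n + 1)) ℝ)
    (C : (n : ℕ) → Fin 2 → Matrix (Fin (n + 1)) (Fin n) ℝ)
    (hTTR : ∀ (n : ℕ) (i : Fin 2) (κ : Fin (n + 1)),
      MvPolynomial.X i * P n κ =
        (∑ j, A n i κ j • P (n + 1) j) + (∑ j, B n i κ j • P n j) +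
        MvPolynomial.X 0 * MvPolynomial.X 1 *
          ∑ j : Fin n, C n i κ j •
            P (n - 1) ⟨(j : ℕ), lt_of_lt_of_le j.isLt (by omega)⟩)
    (n : ℕ)
    (hrank : (Matrix.of fun (r : Fin (n + 1) ⊕ Fin (n + 1)) (c : Fin (n + 2)) =>
        Sum.elim (fun r₁ => A n 0 r₁ c) (fun r₂ => A n 1 r₂ c) r).rank = n + 2) :
    ∃ D₁ D₂ : Matrix (Fin (n + 2)) (Fin (n + 1)) ℝ,
      D₁ * A n 0 + D₂ * A n 1 = 1 ∧
      ∀ κ : Fin (n + 2),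
        P (n + 1) κ =
          MvPolynomial.X 0 * (∑ j, D₁ κ j • P n j) +
          MvPolynomial.X 1 * (∑ j, D₂ κ j • P n j) +
          (∑ j, (-(D₁ * B n 0 + D₂ * B n 1)) κ j • P n j) +
          MvPolynomial.X 0 * MvPolynomial.X 1 *
            ∑ j : Fin n, (-(D₁ * C n 0 + D₂ * C n 1)) κ j •
              P (n - 1) ⟨(j : ℕ), lt_of_lt_of_le j.isLt (by omega)⟩ := by
  classical
  set M : Matrix (Fin (n + 1) ⊕ Fin (n + 1)) (Fin (n + 2)) ℝ :=
    Matrix.of fun r c => Sum.elim (fun r₁ => A n 0 r₁ c) (fun r₂ => A n 1 r₂ c) r with hM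
  -- reindex rows to a Fin type to apply the left-inverse lemma
  let e : Fin (2 * (n + 1)) ≃ (Fin (n + 1) ⊕ Fin (n + 1)) :=
    (finCongr (two_mul (n + 1))).trans finSumFinEquiv.symm
  have hrank' : (M.submatrix e id).rank = n + 2 := by
    rw [RII_aux_rank_submatrix]
    exact hrank
  obtain ⟨L', hL'⟩ := RII_aux_leftinv (M.submatrix e id) hrank'
  set L : Matrix (Fin (n + 2)) (Fin (n + 1) ⊕ Fin (n + 1)) ℝ :=
    L'.submatrix id e.symm with hLdef
  have hL : L * M = 1 := by
    have : L * M = L' * (M.submatrix e id) := by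
      ext κ k
      rw [Matrix.mul_apply, Matrix.mul_apply]
      exact (Fintype.sum_equiv e (fun s => L' κ s * (M.submatrix e id) s k)
        (fun r => L κ r * M r k) (fun s => by simp [hLdef])).symm
    rw [this, hL']
  set D₁ : Matrix (Fin (n + 2)) (Fin (n + 1)) ℝ := fun κ j => L κ (Sum.inl j) with hD₁
  set D₂ : Matrix (Fin (n + 2)) (Fin (n + 1)) ℝ := fun κ j => L κ (Sum.inr j) with hD₂
  have hD : D₁ * A n 0 + D₂ * A n 1 = 1 := by
    rw [← hL]; ext κ k
    rw [Matrix.add_apply, Matrix.mul_apply, Matrix.mul_apply, Matrix.mul_apply,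
      Fintype.sum_sum_type]
    rfl
  refine ⟨D₁, D₂, hD, fun κ => ?_⟩
  set S : Fin n → MvPolynomial (Fin 2) ℝ :=
    fun j => P (n - 1) ⟨(j : ℕ), lt_of_lt_of_le j.isLt (by omega)⟩ with hS
  have h₀ := RII_aux_rowexp (P n) (P n) (D₁ κ) (P (n + 1)) S (A n 0) (B n 0) (C n 0)
    (MvPolynomial.X 0) (MvPolynomial.X 1) (fun j => hTTR n 0 j)
  have h₁ := RII_aux_rowexp (P n) (P n) (D₂ κ) (P (n + 1)) S (A n 1) (B n 1) (C n 1)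
    (MvPolynomial.X 1) (MvPolynomial.X 0)
    (fun j => by rw [mul_comm (MvPolynomial.X 1 : MvPolynomial (Fin 2) ℝ) (MvPolynomial.X 0)]
                 exact hTTR n 1 j)
  have hQ : (∑ k, (∑ j, D₁ κ j * A n 0 j k) • P (n + 1) k)
      + (∑ k, (∑ j, D₂ κ j * A n 1 j k) • P (n + 1) k) = P (n + 1) κ := by
    rw [← Finset.sum_add_distrib]
    have : ∀ k, (∑ j, D₁ κ j * A n 0 j k) + (∑ j, D₂ κ j * A n 1 j k)
        = (1 : Matrix (Fin (n+2)) (Fin (n+2)) ℝ) κ k := by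
      intro k
      rw [← hD, Matrix.add_apply, Matrix.mul_apply, Matrix.mul_apply]
    simp_rw [← add_smul, this, Matrix.one_apply]
    simp
  have hcomb := congrArg₂ (· + ·) h₀ h₁
  simp only [Matrix.neg_apply, Matrix.add_apply, Matrix.mul_apply, neg_add, add_smul,
    neg_smul, Finset.sum_add_distrib, Finset.sum_neg_distrib, mul_neg, mul_add]
  linear_combination -hcomb - hQ
end

section
/- Koornwinder-type construction for varying weights: let w₁ on (a,b) ⊂ ℝ⁺ and w₂ on (c,d) ⊂ ℝ⁺ be positive weight functions, ρ a degree-one polynomial positive on (a,b), and define W(x₁,x₂) = w₁(x₁) w₂(x₂/ρ(x₁)) on Ω = {(x₁,x₂) : a < x₁ < b, cρ(x₁) < x₂ < dρ(x₁)}. For fixed n and 0 ≤ k ≤ n, let p_{n-k}^{(n,k)} be the monic degree-(n−k) polynomial orthogonal with respect to ρ(x₁)^{2k+1−n} w₁(x₁) x₁^{-n} on (a,b), and q_k^{(n)} the monic degree-k polynomial orthogonal with respect to w₂(x₂) x₂^{-n} on (c,d). Then P_{n-k,k}(x₁,x₂) = p_{n-k}^{(n,k)}(x₁) ρ(x₁)^k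 q_k^{(n)}(x₂/ρ(x₁)) satisfies ∬_Ω x₁^{m-j} x₂^j P_{n-k,k}(x₁,x₂) x₁^{-n} x₂^{-n} W(x₁,x₂) dx₁dx₂ = 0 for all 0 ≤ m ≤ n−1 and 0 ≤ j ≤ m. -/
open MeasureTheory

set_option maxHeartbeats 1000000 in
/-- Koornwinder-type construction for varying weights: with
`W(x₁,x₂) = w₁(x₁) w₂(x₂/ρ(x₁))` on the region
`Ω = {(x₁,x₂) : a < x₁ < b, cρ(x₁) < x₂ < dρ(x₁)}`, if `p = p_{n-k}^{(n,k)}` is the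
monic degree-`(n-k)` polynomial orthogonal w.r.t. `ρ(x₁)^{2k+1} w₁(x₁)/(ρ(x₁)^n x₁^n)`
and `q = q_k^{(n)}` is the monic degree-`k` polynomial orthogonal w.r.t. `w₂(t)/t^n`,
then `P_{n-k,k}(x₁,x₂) = p(x₁) ρ(x₁)^k q(x₂/ρ(x₁))` satisfies the varying
orthogonality conditions of order `n`. -/
theorem koornwinder_varying_orthogonality
    (a b c d : ℝ) (ha : 0 < a) (hab : a < b) (hc : 0 < c) (hcd : c < d)
    (w₁ w₂ : ℝ → ℝ)
    (hw₁ : ∀ x ∈ Set.Ioo a b, 0 < w₁ x) (hw₂ : ∀ t ∈ Set.Ioo c d, 0 < w₂ t)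
    (ρ : ℝ → ℝ) (u v : ℝ) (hu : u ≠ 0) (hρ : ∀ x, ρ x = u * x + v)
    (hρpos : ∀ x ∈ Set.Ioo a b, 0 < ρ x)
    (n k : ℕ) (hk : k ≤ n)
    (p q : Polynomial ℝ)
    (hpmonic : p.Monic) (hpdeg : p.natDegree = n - k)
    (hqmonic : q.Monic) (hqdeg : q.natDegree = k)
    (hporth : ∀ r < n - k,
      ∫ x in Set.Ioo a b,
        x ^ r * p.eval x * (ρ x ^ (2 * k + 1) * w₁ x / (ρ x ^ n * x ^ n)) = 0)
    (hqorth : ∀ r < k,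
      ∫ t in Set.Ioo c d, t ^ r * q.eval t * (w₂ t / t ^ n) = 0)
    (Ω : Set (ℝ × ℝ))
    (hΩ : Ω = {z : ℝ × ℝ |
      a < z.1 ∧ z.1 < b ∧ c * ρ z.1 < z.2 ∧ z.2 < d * ρ z.1})
    (hint : ∀ r s : ℤ,
      IntegrableOn (fun z : ℝ × ℝ =>
        z.1 ^ r * z.2 ^ s * (w₁ z.1 * w₂ (z.2 / ρ z.1))) Ω)
    (hint₁ : ∀ r : ℤ, IntegrableOn (fun x : ℝ => x ^ r * w₁ x) (Set.Ioo a b))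
    (hint₂ : ∀ r : ℤ, IntegrableOn (fun t : ℝ => t ^ r * w₂ t) (Set.Ioo c d)) :
    ∀ m < n, ∀ j ≤ m,
      ∫ z in Ω,
        z.1 ^ (m - j) * z.2 ^ j *
          (p.eval z.1 * ρ z.1 ^ k * q.eval (z.2 / ρ z.1)) *
          (z.1 ^ (-(n : ℤ)) * z.2 ^ (-(n : ℤ)) * (w₁ z.1 * w₂ (z.2 / ρ z.1))) = 0 := by
  intro m hm j hjm
  -- preliminaries
  have hρc : Continuous ρ := by
    have h : ρ = fun x => u * x + v := funext hρ
    rw [h]; fun_prop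
  have hΩmeas : MeasurableSet Ω := by
    rw [hΩ]
    exact ((isOpen_lt continuous_const continuous_fst).inter
      ((isOpen_lt continuous_fst continuous_const).inter
        ((isOpen_lt (continuous_const.mul (hρc.comp continuous_fst)) continuous_snd).inter
          (isOpen_lt continuous_snd (continuous_const.mul (hρc.comp continuous_fst)))))).measurableSet
  have hΩmem : ∀ z : ℝ × ℝ, z ∈ Ω →
      z.1 ∈ Set.Ioo a b ∧ 0 < z.1 ∧ 0 < ρ z.1 ∧ 0 < z.2 := by
    intro z hz
    rw [hΩ] at hz
    obtain ⟨h1, h2, h3, h4⟩ := hz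
    have hx : z.1 ∈ Set.Ioo a b := ⟨h1, h2⟩
    have hρz : 0 < ρ z.1 := hρpos _ hx
    exact ⟨hx, ha.trans h1, hρz, lt_trans (by positivity) h3⟩
  -- slice lemmas
  have hslice1 : ∀ (f : ℝ × ℝ → ℝ) (x : ℝ), x ∈ Set.Ioo a b → ∀ y : ℝ,
      Ω.indicator f (x, y) =
        (Set.Ioo (c * ρ x) (d * ρ x)).indicator (fun y => f (x, y)) y := by
    intro f x hx y
    classical
    have hiff : ((x, y) ∈ Ω) ↔ y ∈ Set.Ioo (c * ρ x) (d * ρ x) := by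
      rw [hΩ]; simp [Set.mem_Ioo, hx.1, hx.2]
    rw [Set.indicator_apply, Set.indicator_apply, if_congr hiff rfl rfl]
  have hslice2 : ∀ (f : ℝ × ℝ → ℝ) (x : ℝ), x ∉ Set.Ioo a b → ∀ y : ℝ,
      Ω.indicator f (x, y) = 0 := by
    intro f x hx y
    apply Set.indicator_of_notMem
    rw [hΩ]
    intro h
    exact hx ⟨h.1, h.2.1⟩
  -- Fubini
  have hfub : ∀ f : ℝ × ℝ → ℝ, IntegrableOn f Ω →
      ∫ z in Ω, f z = ∫ x in Set.Ioo a b, ∫ y in Set.Ioo (c * ρ x) (d * ρ x), f (x, y) := by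
    intro f hf
    rw [← integral_indicator hΩmeas]
    have hprod : Integrable (Ω.indicator f) ((volume : Measure ℝ).prod volume) := by
      rw [← Measure.volume_eq_prod]
      exact (integrable_indicator_iff hΩmeas).2 hf
    calc ∫ z, Ω.indicator f z
        = ∫ z, Ω.indicator f z ∂((volume : Measure ℝ).prod volume) := by
          rw [Measure.volume_eq_prod]
      _ = ∫ x, ∫ y, Ω.indicator f (x, y) := integral_prod _ hprod
      _ = ∫ x, (Set.Ioo a b).indicator
            (fun x => ∫ y in Set.Ioo (c * ρ x) (d * ρ x), f (x, y)) x := by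
          refine integral_congr_ae (Filter.Eventually.of_forall fun x => ?_)
          by_cases hx : x ∈ Set.Ioo a b
          · rw [Set.indicator_of_mem hx]
            simp only [hslice1 f x hx]
            rw [integral_indicator measurableSet_Ioo]
          · rw [Set.indicator_of_notMem hx]
            simp only [hslice2 f x hx]
            simp
      _ = ∫ x in Set.Ioo a b, ∫ y in Set.Ioo (c * ρ x) (d * ρ x), f (x, y) :=
          integral_indicator measurableSet_Ioo
  -- change of variables in the inner integral
  have hchg : ∀ x : ℝ, 0 < ρ x → ∀ g : ℝ → ℝ,
      ∫ y in Set.Ioo (c * ρ x) (d * ρ x), g y = ρ x * ∫ t in Set.Ioo c d, g (ρ x * t) := by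
    intro x hρx g
    have h1 : c * ρ x ≤ d * ρ x := by nlinarith [hcd.le]
    rw [← integral_Ioc_eq_integral_Ioo, ← intervalIntegral.integral_of_le h1]
    have h2 := intervalIntegral.smul_integral_comp_mul_left (a := c) (b := d) g (ρ x)
    rw [mul_comm (ρ x) c, mul_comm (ρ x) d] at h2
    rw [← h2, intervalIntegral.integral_of_le hcd.le, integral_Ioc_eq_integral_Ioo,
      smul_eq_mul]
  -- integrability of generalized monomials on Ω
  have hIlem : ∀ (e : ℕ) (r s : ℤ), IntegrableOn
      (fun z : ℝ × ℝ => z.1 ^ r * z.2 ^ s * ρ z.1 ^ e * (w₁ z.1 * w₂ (z.2 / ρ z.1))) Ω := by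
    intro e
    induction e with
    | zero => intro r s; simpa using hint r s
    | succ e ih =>
      intro r s
      have h := ((ih (r + 1) s).const_mul u).add ((ih r s).const_mul v)
      apply h.congr
      filter_upwards [ae_restrict_mem hΩmeas] with z hz
      obtain ⟨-, hx, hρz, -⟩ := hΩmem z hz
      have h1 : z.1 ^ (r + 1) = z.1 ^ r * z.1 := zpow_add_one₀ hx.ne' r
      simp only [Pi.add_apply]
      rw [pow_succ, hρ z.1, h1]
      ring
  -- the main integrand
  set F : ℝ × ℝ → ℝ := fun z =>
    z.1 ^ (m - j) * z.2 ^ j *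
      (p.eval z.1 * ρ z.1 ^ k * q.eval (z.2 / ρ z.1)) *
      (z.1 ^ (-(n : ℤ)) * z.2 ^ (-(n : ℤ)) * (w₁ z.1 * w₂ (z.2 / ρ z.1))) with hF
  have hpdeg' : p.natDegree < n - k + 1 := by rw [hpdeg]; exact Nat.lt_succ_self _
  have hqdeg' : q.natDegree < k + 1 := by rw [hqdeg]; exact Nat.lt_succ_self _
  have hFint : IntegrableOn F Ω := by
    have hsum : IntegrableOn (fun z : ℝ × ℝ =>
        ∑ i ∈ Finset.range (n - k + 1), ∑ l ∈ Finset.range (k + 1),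
          (p.coeff i * q.coeff l) *
            (z.1 ^ (((m - j + i : ℕ) : ℤ) - (n : ℤ)) * z.2 ^ (((j + l : ℕ) : ℤ) - (n : ℤ)) *
              ρ z.1 ^ (k - l) * (w₁ z.1 * w₂ (z.2 / ρ z.1)))) Ω := by
      apply integrable_finset_sum
      intro i _
      apply integrable_finset_sum
      intro l _
      exact (hIlem (k - l) _ _).const_mul _
    apply hsum.congr
    filter_upwards [ae_restrict_mem hΩmeas] with z hz
    obtain ⟨hxab, hx, hρz, hy⟩ := hΩmem z hz
    rw [hF]
    dsimp only
    rw [Polynomial.eval_eq_sum_range' hpdeg', Polynomial.eval_eq_sum_range' hqdeg']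
    simp only [Finset.sum_mul, Finset.mul_sum]
    conv_lhs => rw [Finset.sum_comm]
    refine Finset.sum_congr rfl fun l hl => Finset.sum_congr rfl fun i hi => ?_
    have hl' : l ≤ k := Nat.lt_succ_iff.mp (Finset.mem_range.mp hl)
    rw [zpow_sub₀ hx.ne', zpow_sub₀ hy.ne', zpow_natCast, zpow_natCast,
      zpow_natCast, zpow_natCast, pow_sub₀ _ hρz.ne' hl', div_pow, pow_add, pow_add,
      zpow_neg, zpow_neg, zpow_natCast, zpow_natCast]
    field_simp
  -- measurability of w₁ on (a,b)
  have hw₁meas : AEStronglyMeasurable w₁ (volume.restrict (Set.Ioo a b)) := by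
    have h := (hint₁ 0).aestronglyMeasurable
    simpa using h
  -- integrability of the 1D orthogonality integrands
  have hTint : ∀ r : ℕ, IntegrableOn
      (fun x => x ^ r * p.eval x * (ρ x ^ (2 * k + 1) * w₁ x / (ρ x ^ n * x ^ n)))
      (Set.Ioo a b) := by
    intro r
    set H : ℝ × ℝ → ℝ := fun z =>
      z.1 ^ r * p.eval z.1 * z.1 ^ (-(n : ℤ)) * z.2 ^ ((2 * k : ℤ) - n) *
        (w₁ z.1 * w₂ (z.2 / ρ z.1)) with hH
    have hHint : IntegrableOn H Ω := by
      have hs : IntegrableOn (fun z : ℝ × ℝ =>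
          ∑ i ∈ Finset.range (n - k + 1),
            p.coeff i * (z.1 ^ (((r + i : ℕ) : ℤ) - (n : ℤ)) * z.2 ^ ((2 * k : ℤ) - n) *
              (w₁ z.1 * w₂ (z.2 / ρ z.1)))) Ω :=
        integrable_finset_sum _ (fun i _ => (hint _ _).const_mul _)
      apply hs.congr
      filter_upwards [ae_restrict_mem hΩmeas] with z hz
      obtain ⟨hxab, hx, hρz, hy⟩ := hΩmem z hz
      rw [hH]
      dsimp only
      rw [Polynomial.eval_eq_sum_range' hpdeg']
      simp only [Finset.sum_mul, Finset.mul_sum]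
      refine Finset.sum_congr rfl fun i hi => ?_
      rw [zpow_sub₀ hx.ne', zpow_natCast, pow_add, zpow_neg, zpow_natCast]
      field_simp
    have hHprod : Integrable (Ω.indicator H) ((volume : Measure ℝ).prod volume) := by
      rw [← Measure.volume_eq_prod]
      exact (integrable_indicator_iff hΩmeas).2 hHint
    have h1 : Integrable (fun x => ∫ y, ‖Ω.indicator H (x, y)‖) volume :=
      hHprod.integral_norm_prod_left
    set Cq : ℝ := ∫ t in Set.Ioo c d, ‖t ^ ((2 * k : ℤ) - n) * w₂ t‖ with hCq
    have hCqpos : 0 < Cq := by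
      rw [hCq]
      rw [setIntegral_pos_iff_support_of_nonneg_ae
        (Filter.Eventually.of_forall fun t => norm_nonneg _) ((hint₂ _).norm)]
      refine lt_of_lt_of_le ?_ (measure_mono (Set.subset_inter ?_ Set.Subset.rfl))
      · rw [Real.volume_Ioo]
        simp [hcd]
      · intro t ht
        have ht0 : 0 < t := hc.trans ht.1
        have hw : 0 < w₂ t := hw₂ t ht
        have hne : t ^ ((2 * k : ℤ) - n) * w₂ t ≠ 0 := by positivity
        simp only [Function.mem_support, ne_eq, norm_eq_zero]
        exact hne
    set B : ℝ → ℝ := fun x =>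
      ‖x ^ r * p.eval x * x ^ (-(n : ℤ)) * w₁ x * ρ x ^ ((2 * k : ℤ) - n)‖ with hB
    have heq : (fun x => ∫ y, ‖Ω.indicator H (x, y)‖) =
        (Set.Ioo a b).indicator (fun x => ρ x * B x * Cq) := by
      funext x
      by_cases hx : x ∈ Set.Ioo a b
      · rw [Set.indicator_of_mem hx]
        have hρx := hρpos x hx
        have hnorm : ∀ y : ℝ, ‖Ω.indicator H (x, y)‖ =
            (Set.Ioo (c * ρ x) (d * ρ x)).indicator (fun y => ‖H (x, y)‖) y := by
          intro y
          rw [norm_indicator_eq_indicator_norm, hslice1 (fun z => ‖H z‖) x hx y]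
        simp only [hnorm]
        rw [integral_indicator measurableSet_Ioo, hchg x hρx]
        have h2 : ∀ t : ℝ, ‖H (x, ρ x * t)‖ = B x * ‖t ^ ((2 * k : ℤ) - n) * w₂ t‖ := by
          intro t
          rw [hH, hB]
          dsimp only
          rw [mul_div_cancel_left₀ _ hρx.ne', mul_zpow, ← norm_mul]
          congr 1
          ring
        simp only [h2]
        rw [integral_const_mul, hCq]
        ring
      · rw [Set.indicator_of_notMem hx]
        simp only [hslice2 H x hx]
        simp
    rw [heq] at h1
    have h3 : IntegrableOn (fun x => ρ x * B x * Cq) (Set.Ioo a b) :=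
      (integrable_indicator_iff measurableSet_Ioo).1 h1
    have h4 : IntegrableOn (fun x => ρ x * B x) (Set.Ioo a b) := by
      have h5 := h3.mul_const Cq⁻¹
      apply h5.congr
      filter_upwards with x
      field_simp
    have hmeasT : AEStronglyMeasurable
        (fun x => x ^ r * p.eval x * (ρ x ^ (2 * k + 1) * w₁ x / (ρ x ^ n * x ^ n)))
        (volume.restrict (Set.Ioo a b)) := by
      have hw₁aem : AEMeasurable w₁ (volume.restrict (Set.Ioo a b)) :=
        hw₁meas.aemeasurable
      have hm1 : Measurable fun x : ℝ => x ^ r * p.eval x :=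
        ((continuous_pow r).mul (Polynomial.continuous p)).measurable
      have hm2 : Measurable fun x : ℝ => ρ x ^ (2 * k + 1) :=
        (hρc.pow (2 * k + 1)).measurable
      have hm3 : Measurable fun x : ℝ => ρ x ^ n * x ^ n :=
        ((hρc.pow n).mul (continuous_pow n)).measurable
      exact (hm1.aemeasurable.mul
        ((hm2.aemeasurable.mul hw₁aem).div hm3.aemeasurable)).aestronglyMeasurable
    refine (integrable_norm_iff hmeasT).1 ?_
    apply h4.congr
    filter_upwards [ae_restrict_mem measurableSet_Ioo] with x hx
    have hρx := hρpos x hx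
    have hx0 : (0 : ℝ) < x := ha.trans hx.1
    have hT : x ^ r * p.eval x * (ρ x ^ (2 * k + 1) * w₁ x / (ρ x ^ n * x ^ n)) =
        ρ x * (x ^ r * p.eval x * x ^ (-(n : ℤ)) * w₁ x * ρ x ^ ((2 * k : ℤ) - n)) := by
      have e1 : ρ x ^ ((2 * k : ℤ) - n) = ρ x ^ (2 * k) / ρ x ^ n := by
        rw [zpow_sub₀ hρx.ne']
        norm_cast
      have e2 : x ^ (-(n : ℤ)) = (x ^ n)⁻¹ := by
        rw [zpow_neg, zpow_natCast]
      rw [e1, e2]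
      field_simp
      ring
    show ρ x * B x = ‖x ^ r * p.eval x * (ρ x ^ (2 * k + 1) * w₁ x / (ρ x ^ n * x ^ n))‖
    rw [hT, norm_mul, Real.norm_of_nonneg hρx.le]
  -- main computation
  set Qj : ℝ := ∫ t in Set.Ioo c d, t ^ j * q.eval t * (w₂ t / t ^ n) with hQj
  set A : ℝ → ℝ := fun x =>
    x ^ (m - j) * p.eval x * (x ^ (-(n : ℤ)) * w₁ x) * ρ x ^ ((k : ℤ) + j - n + 1) with hA
  have e2 : ∀ w : ℝ, w ^ (-(n : ℤ)) = (w ^ n)⁻¹ := fun w => by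
    rw [zpow_neg, zpow_natCast]
  have hinner : Set.EqOn (fun x => ∫ y in Set.Ioo (c * ρ x) (d * ρ x), F (x, y))
      (fun x => A x * Qj) (Set.Ioo a b) := by
    intro x hx
    have hρx := hρpos x hx
    dsimp only
    rw [hchg x hρx]
    have hpt : ∀ t : ℝ, F (x, ρ x * t) =
        (x ^ (m - j) * p.eval x * (x ^ (-(n : ℤ)) * w₁ x) * ρ x ^ ((k : ℤ) + j - n)) *
          (t ^ j * q.eval t * (w₂ t / t ^ n)) := by
      intro t
      rw [hF]
      dsimp only
      rw [mul_div_cancel_left₀ _ hρx.ne']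
      have e1 : ρ x ^ ((k : ℤ) + j - n) = ρ x ^ k * ρ x ^ j / ρ x ^ n := by
        rw [show (k : ℤ) + j - n = ((k + j : ℕ) : ℤ) - (n : ℤ) by push_cast; ring,
          zpow_sub₀ hρx.ne']
        norm_cast
        rw [pow_add]
      rw [mul_pow, mul_zpow, e1]
      simp only [e2]
      field_simp
    simp only [hpt]
    rw [integral_const_mul]
    have hstep : ρ x ^ ((k : ℤ) + j - n + 1) = ρ x ^ ((k : ℤ) + j - n) * ρ x :=
      zpow_add_one₀ hρx.ne' _
    simp only [hA]
    rw [hstep, ← hQj]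
    ring
  rw [hfub F hFint, setIntegral_congr_fun measurableSet_Ioo hinner]
  rcases lt_or_ge j k with hjk | hkj
  · have hQ0 : Qj = 0 := hqorth j hjk
    simp [hQ0]
  · rw [integral_mul_const]
    have hA0 : ∫ x in Set.Ioo a b, A x = 0 := by
      have hdec : Set.EqOn A (fun x => ∑ i ∈ Finset.range (j - k + 1),
          (u ^ i * v ^ (j - k - i) * ((j - k).choose i : ℝ)) *
            (x ^ (m - j + i) * p.eval x * (ρ x ^ (2 * k + 1) * w₁ x / (ρ x ^ n * x ^ n))))
          (Set.Ioo a b) := by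
        intro x hx
        have hρx := hρpos x hx
        have hx0 : (0 : ℝ) < x := ha.trans hx.1
        have hrho : ρ x ^ ((k : ℤ) + j - n + 1) =
            ρ x ^ (j - k) * (ρ x ^ (2 * k + 1) / ρ x ^ n) := by
          rw [show (k : ℤ) + j - n + 1 = ((j - k + (2 * k + 1) : ℕ) : ℤ) - (n : ℤ) by
              push_cast [hkj]; ring,
            zpow_sub₀ hρx.ne']
          norm_cast
          rw [pow_add, mul_div_assoc]
        have hbin : ρ x ^ (j - k) = ∑ i ∈ Finset.range (j - k + 1),
            x ^ i * (u ^ i * v ^ (j - k - i) * ((j - k).choose i : ℝ)) := by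
          rw [hρ x, add_pow]
          refine Finset.sum_congr rfl fun i _ => ?_
          rw [mul_pow]
          ring
        simp only [hA]
        rw [hrho, hbin, Finset.sum_mul, Finset.mul_sum]
        refine Finset.sum_congr rfl fun i _ => ?_
        rw [pow_add, e2]
        field_simp
        ring
      rw [setIntegral_congr_fun measurableSet_Ioo hdec,
        integral_finset_sum _ (fun i _ => ((hTint (m - j + i)).const_mul _))]
      refine Finset.sum_eq_zero fun i hi => ?_
      rw [integral_const_mul, hporth (m - j + i)
        (by have := Finset.mem_range.mp hi; omega), mul_zero]
    rw [hA0, zero_mul]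
end
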